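/- For every i ≥ 5, T_{i-3} occurs in T_i exactly at positions 1, τ_{i-3}+τ_{i-4}+1, τ_{i-2}+τ_{i-3}+1, τ_{i-1}+τ_{i-3}+1, and τ_{i-1}+τ_{i-2}+1, where τ_j = 2^{j-1}. -/

import Mathlib

/-- Thue-Morse words over the alphabet {a, b}, encoded with `false` = a, `true` = b:
`T 1 = a` and `T i = T (i-1) ++ complement (T (i-1))` for `i ≥ 2`, where the
complement swaps the two letters. -/
def tmw : ℕ → List Bool
  | 0 => []
  | 1 => [false]
  | n + 2 => tmw (n + 1) ++ (tmw (n + 1)).map (fun c => !c)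

/-- Complement: swap each a with b and vice versa. -/
def comp (S : List Bool) : List Bool := S.map (fun c => !c)

/-- `S` occurs in `T` at (1-based) position `p`. -/
def occursAt (S T : List Bool) (p : ℕ) : Prop :=
  1 ≤ p ∧ S <+: T.drop (p - 1)

def mu (w : List Bool) : List Bool := w.flatMap (fun c => [c, !c])

lemma mu_nil : mu [] = [] := rfl
lemma mu_cons (c : Bool) (w : List Bool) : mu (c :: w) = c :: (!c) :: mu w := rfl

lemma mu_append (a b : List Bool) : mu (a ++ b) = mu a ++ mu b :=
  List.flatMap_append

lemma mu_map_not (w : List Bool) :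
    mu (w.map (fun c => !c)) = (mu w).map (fun c => !c) := by
  induction w with
  | nil => rfl
  | cons c w ih => simp [mu_cons, ih]

lemma tmw_succ (n : ℕ) : tmw (n + 2) = mu (tmw (n + 1)) := by
  induction n with
  | zero => rfl
  | succ n ih =>
    have h0 : tmw (n + 3) = tmw (n + 2) ++ (tmw (n + 2)).map (fun c => !c) := rfl
    rw [h0, ih, ← mu_map_not, ← mu_append, ← ih]
    rfl

lemma mu_length (w : List Bool) : (mu w).length = 2 * w.length := by
  induction w with
  | nil => rfl
  | cons c w ih => simp [mu_cons, ih]; omega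

lemma tmw_len (n : ℕ) : (tmw (n + 1)).length = 2 ^ n := by
  induction n with
  | zero => rfl
  | succ n ih => rw [tmw_succ, mu_length, ih, pow_succ]; ring

lemma mu_drop (w : List Bool) (m : ℕ) : (mu w).drop (2 * m) = mu (w.drop m) := by
  induction w generalizing m with
  | nil => simp [mu_nil]
  | cons c w ih =>
    cases m with
    | zero => simp
    | succ m =>
      rw [mu_cons]
      have : 2 * (m + 1) = (2 * m) + 1 + 1 := by omega
      rw [this]
      simp only [List.drop_succ_cons, List.drop]
      exact ih m

lemma mu_prefix {s t : List Bool} : mu s <+: mu t ↔ s <+: t := by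
  constructor
  · intro h
    induction s generalizing t with
    | nil => exact List.nil_prefix
    | cons a s ih =>
      cases t with
      | nil =>
        exfalso
        have := h.length_le
        simp [mu_cons, mu_nil] at this
      | cons b t =>
        rw [mu_cons, mu_cons, List.cons_prefix_cons] at h
        obtain ⟨hab, h⟩ := h
        rw [List.cons_prefix_cons] at h
        rw [List.cons_prefix_cons]
        exact ⟨hab, ih h.2⟩
  · rintro ⟨u, rfl⟩
    exact ⟨mu u, (mu_append s u).symm⟩

lemma mu_getElem_even (t : List Bool) (j : ℕ) : (mu t)[2 * j]? = t[j]? := by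
  induction t generalizing j with
  | nil => simp [mu_nil]
  | cons c t ih =>
    cases j with
    | zero => simp [mu_cons]
    | succ j =>
      have : 2 * (j + 1) = (2 * j) + 2 := by omega
      rw [mu_cons, this]
      simpa using ih j

lemma mu_getElem_odd (t : List Bool) (j : ℕ) :
    (mu t)[2 * j + 1]? = (t[j]?).map (fun c => !c) := by
  induction t generalizing j with
  | nil => simp [mu_nil]
  | cons c t ih =>
    cases j with
    | zero => simp [mu_cons]
    | succ j =>
      have : 2 * (j + 1) + 1 = ((2 * j) + 1) + 2 := by omega
      rw [mu_cons, this]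
      simpa using ih j

lemma occ_mu (s t : List Bool) (q : ℕ) :
    mu (false :: true :: s) <+: (mu t).drop q ↔
      ∃ m, q = 2 * m ∧ (false :: true :: s) <+: t.drop m := by
  constructor
  · intro h
    rcases Nat.even_or_odd q with ⟨m, hm⟩ | ⟨m, hm⟩
    · refine ⟨m, by omega, ?_⟩
      rw [show q = 2 * m by omega, mu_drop] at h
      exact mu_prefix.mp h
    · exfalso
      subst hm
      obtain ⟨u, hu⟩ := h
      have h1 : (mu t)[2 * m + 1 + 1]? = some true := by
        rw [← List.getElem?_drop, ← hu]
        simp [mu_cons]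
      have h2 : (mu t)[2 * m + 1 + 2]? = some true := by
        rw [← List.getElem?_drop, ← hu]
        simp [mu_cons]
      rw [show 2 * m + 1 + 1 = 2 * (m + 1) by omega, mu_getElem_even] at h1
      rw [show 2 * m + 1 + 2 = 2 * (m + 1) + 1 by omega, mu_getElem_odd, h1] at h2
      simp at h2
  · rintro ⟨m, rfl, h⟩
    rw [mu_drop]
    exact mu_prefix.mpr h

lemma tmw_head (n : ℕ) : ∃ s, tmw (n + 2) = false :: true :: s := by
  induction n with
  | zero => exact ⟨[], rfl⟩
  | succ n ih =>
    obtain ⟨s, hs⟩ := ih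
    refine ⟨s ++ (tmw (n + 2)).map (fun c => !c), ?_⟩
    show tmw (n + 2) ++ _ = _
    rw [hs]
    rfl

lemma Q (n : ℕ) (q : ℕ) :
    tmw (n + 2) <+: (tmw (n + 5)).drop q ↔
      q = 0 ∨ q = 3 * 2 ^ n ∨ q = 6 * 2 ^ n ∨ q = 10 * 2 ^ n ∨ q = 12 * 2 ^ n := by
  induction n generalizing q with
  | zero =>
    constructor
    · intro h
      have hlen := h.length_le
      simp only [List.length_drop] at hlen
      have h2 : (tmw 2).length = 2 := rfl
      have h5 : (tmw 5).length = 16 := rfl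
      rw [h2, h5] at hlen
      have hq : q ≤ 14 := by omega
      interval_cases q <;> revert h <;> decide
    · intro h
      norm_num at h
      rcases h with rfl | rfl | rfl | rfl | rfl <;> decide
  | succ n ih =>
    have e1 : tmw (n + 1 + 2) = mu (tmw (n + 2)) := tmw_succ (n + 1)
    have e2 : tmw (n + 1 + 5) = mu (tmw (n + 5)) := tmw_succ (n + 4)
    obtain ⟨s, hs⟩ := tmw_head n
    rw [e1, e2, hs, occ_mu]
    have hx : (2 : ℕ) ^ (n + 1) = 2 * 2 ^ n := by rw [pow_succ]; ring
    constructor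
    · rintro ⟨m, rfl, h⟩
      rw [← hs] at h
      have := (ih m).mp h
      rw [hx]
      omega
    · intro h
      rw [hx] at h
      refine ⟨q / 2, by omega, ?_⟩
      rw [← hs]
      refine (ih (q / 2)).mpr ?_
      have h2n : (0:ℕ) < 2 ^ n := Nat.pow_pos (by norm_num)
      omega

theorem tm_sub3_occurrences (i : ℕ) (hi : 5 ≤ i) (p : ℕ) :
    occursAt (tmw (i - 3)) (tmw i) p ↔
      p = 1 ∨ p = (tmw (i - 3)).length + (tmw (i - 4)).length + 1 ∨
        p = (tmw (i - 2)).length + (tmw (i - 3)).length + 1 ∨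
        p = (tmw (i - 1)).length + (tmw (i - 3)).length + 1 ∨
        p = (tmw (i - 1)).length + (tmw (i - 2)).length + 1 := by
  obtain ⟨n, rfl⟩ : ∃ n, i = n + 5 := ⟨i - 5, by omega⟩
  have e3 : n + 5 - 3 = n + 2 := by omega
  have e4 : n + 5 - 4 = n + 1 := by omega
  have e2 : n + 5 - 2 = n + 3 := by omega
  have e1 : n + 5 - 1 = n + 4 := by omega
  rw [e1, e2, e3, e4, tmw_len (n + 1), tmw_len n, tmw_len (n + 2), tmw_len (n + 3)]
  have h2n : (0:ℕ) < 2 ^ n := Nat.pow_pos (by norm_num)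
  have hx1 : (2:ℕ) ^ (n + 1) = 2 * 2 ^ n := by rw [pow_succ]; ring
  have hx2 : (2:ℕ) ^ (n + 2) = 4 * 2 ^ n := by rw [pow_succ, hx1]; ring
  have hx3 : (2:ℕ) ^ (n + 3) = 8 * 2 ^ n := by rw [pow_succ, hx2]; ring
  constructor
  · rintro ⟨hp, hpre⟩
    have := (Q n (p - 1)).mp hpre
    omega
  · intro h
    have hp : 1 ≤ p := by omega
    refine ⟨hp, (Q n (p - 1)).mpr ?_⟩
    omega
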